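/- arXiv:1804.08353 — 4 statements merged into one kernel-verified Lean document; each statement's English description precedes it below -/
import Mathlib

section
/- Let X be a countable set and m : X → ℝ with m(x) > 0 for all x and finite total mass m(X). Let S > 0, α ≥ 0, o ∈ X, k ≥ 1, and let φ_1, …, φ_k : X → ℝ be orthonormal in ℓ²(X,m). Let λ_1 ≤ λ_2 ≤ … ≤ λ_k be real numbers with λ_1 ≥ 0 such that for every choice of reals β_1, …, β_k, the function φ = ∑_{j=1}^k β_j φ_j satisfies ‖φ‖_∞² ≤ S(∑_{j=1}^k λ_j β_j² + α φ(o)²). Then λ_k ≥ k/(S · m(X)) − α/m(o). (This is the eigenvalue bound of Theorem 'spectral_bound_lin' applied to the first k eigenvalues and an orthonormal family of corresponding eigenfunctions of the generator of a Dirichlet form satisfying an ℓ^∞_{α,o}-Sobolev inequality with constant S.) -/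
/-!
Evaluating the Sobolev inequality at `y` with coefficients `βⱼ = φⱼ(y)` bounds
`e(y)² ≤ S (λ_k e(y) + α K(o,y)²)`, where `e(y) = ∑ φⱼ(y)²` and `K(o,y) = ∑ φⱼ(o) φⱼ(y)`.
Integrating against `m`, orthonormality gives `∑ e m = k` and `∑ K(o,·)² m = e(o) ≤ k / m(o)`,
while Cauchy–Schwarz gives `k² ≤ m(X) ∑ e² m`; hence `k ≤ S m(X) (λ_k + α / m(o))`.
-/

open Finset

section WeightedCauchySchwarz

variable {X : Type*} {m f : X → ℝ} {T A Q : ℝ}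

theorem sq_le_mul_of_hasSum (hm : ∀ x, 0 ≤ m x) (hT : HasSum m T)
    (hA : HasSum (fun x => f x * m x) A) (hQ : HasSum (fun x => f x ^ 2 * m x) Q) :
    A ^ 2 ≤ T * Q := by
  have hquad : ∀ t : ℝ, 0 ≤ T * (t * t) + (-2 * A) * t + Q := by
    intro t
    have hsum := (hQ.sub (hA.mul_left (2 * t))).add (hT.mul_left (t ^ 2))
    rw [show (fun x => f x ^ 2 * m x - 2 * t * (f x * m x) + t ^ 2 * m x)
        = fun x => (f x - t) ^ 2 * m x from funext fun x => by ring] at hsum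
    linarith [hsum.nonneg fun x => mul_nonneg (sq_nonneg _) (hm x)]
  have hdisc := discrim_le_zero hquad
  rw [discrim] at hdisc
  linarith

end WeightedCauchySchwarz

section Orthonormal

variable {X ι : Type*} [Fintype ι] [DecidableEq ι] {m : X → ℝ} {φ : ι → X → ℝ}

theorem hasSum_sq_sum_mul
    (hφ : ∀ i j, HasSum (fun y => φ i y * φ j y * m y) (if i = j then 1 else 0)) (β : ι → ℝ) :
    HasSum (fun y => (∑ j, β j * φ j y) ^ 2 * m y) (∑ j, β j ^ 2) := by
  have hexpand : ∀ y, (∑ j, β j * φ j y) ^ 2 * m y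
      = ∑ i, ∑ j, β i * β j * (φ i y * φ j y * m y) := by
    intro y
    rw [sq, sum_mul_sum, sum_mul]
    refine sum_congr rfl fun i _ => ?_
    rw [sum_mul]
    refine sum_congr rfl fun j _ => ?_
    ring
  have hvalue : ∑ j, β j ^ 2 = ∑ i, ∑ j, β i * β j * (if i = j then 1 else 0) := by
    simp [sq]
  rw [funext hexpand, hvalue]
  exact hasSum_sum fun i _ => hasSum_sum fun j _ => (hφ i j).mul_left (β i * β j)

theorem hasSum_sum_sq_mul
    (hφ : ∀ i j, HasSum (fun y => φ i y * φ j y * m y) (if i = j then 1 else 0)) :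
    HasSum (fun y => (∑ j, φ j y ^ 2) * m y) (Fintype.card ι) := by
  have h := hasSum_sum (s := univ) fun j _ => hφ j j
  simp only [if_true, sum_const, card_univ, nsmul_eq_mul, mul_one] at h
  simpa only [sum_mul, sq] using h

end Orthonormal

section Sobolev

variable {X ι : Type*} [Fintype ι] {m : X → ℝ} {φ : ι → X → ℝ} {lam : ι → ℝ}
  {S α L T : ℝ} {o : X}

theorem sum_sq_sq_le_of_sobolev (hS : 0 ≤ S) (hlam : ∀ j, lam j ≤ L)
    (hsobolev : ∀ (β : ι → ℝ) (y : X),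
      (∑ j, β j * φ j y) ^ 2 ≤ S * ((∑ j, lam j * β j ^ 2) + α * (∑ j, β j * φ j o) ^ 2))
    (y : X) :
    (∑ j, φ j y ^ 2) ^ 2 ≤ S * (L * ∑ j, φ j y ^ 2 + α * (∑ j, φ j o * φ j y) ^ 2) := by
  have hlam_sum : ∑ j, lam j * φ j y ^ 2 ≤ L * ∑ j, φ j y ^ 2 := by
    rw [mul_sum]
    exact sum_le_sum fun j _ => mul_le_mul_of_nonneg_right (hlam j) (sq_nonneg _)
  have h := hsobolev (fun j => φ j y) y
  simp only [← sq] at h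
  simp_rw [mul_comm (φ _ o)]
  calc _ ≤ _ := h
    _ ≤ _ := by gcongr

theorem card_le_of_sobolev [DecidableEq ι] [Nonempty ι] (hm : ∀ x, 0 ≤ m x) (hmo : 0 < m o)
    (hT : HasSum m T) (hS : 0 ≤ S) (hα : 0 ≤ α)
    (hφ : ∀ i j, HasSum (fun y => φ i y * φ j y * m y) (if i = j then 1 else 0))
    (hlam : ∀ j, lam j ≤ L)
    (hsobolev : ∀ (β : ι → ℝ) (y : X),
      (∑ j, β j * φ j y) ^ 2 ≤ S * ((∑ j, lam j * β j ^ 2) + α * (∑ j, β j * φ j o) ^ 2)) :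
    (Fintype.card ι : ℝ) ≤ S * T * (L + α / m o) := by
  set k : ℝ := (Fintype.card ι : ℝ)
  set e : X → ℝ := fun y => ∑ j, φ j y ^ 2
  set c : X → ℝ := fun y => ∑ j, φ j o * φ j y
  have he : HasSum (fun y => e y * m y) k := hasSum_sum_sq_mul hφ
  have hc : HasSum (fun y => c y ^ 2 * m y) (e o) := hasSum_sq_sum_mul hφ (fun j => φ j o)
  have hbound : HasSum (fun y => S * (L * (e y * m y) + α * (c y ^ 2 * m y)))
      (S * (L * k + α * e o)) := ((he.mul_left L).add (hc.mul_left α)).mul_left S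
  have hpt : ∀ y, e y ^ 2 * m y ≤ S * (L * (e y * m y) + α * (c y ^ 2 * m y)) := fun y =>
    calc e y ^ 2 * m y ≤ S * (L * e y + α * c y ^ 2) * m y :=
          mul_le_mul_of_nonneg_right (sum_sq_sq_le_of_sobolev hS hlam hsobolev y) (hm y)
      _ = S * (L * (e y * m y) + α * (c y ^ 2 * m y)) := by ring
  have hQ := (Summable.of_nonneg_of_le (fun y => mul_nonneg (sq_nonneg _) (hm y)) hpt
    hbound.summable).hasSum
  have heo : e o ≤ k / m o := (le_div_iff₀ hmo).2 <|
    le_hasSum he o fun y _ => mul_nonneg (sum_nonneg fun j _ => sq_nonneg _) (hm y)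
  have hk : 0 < k := Nat.cast_pos.2 Fintype.card_pos
  refine le_of_mul_le_mul_left ?_ hk
  calc k * k = k ^ 2 := sq k |>.symm
    _ ≤ T * ∑' y, e y ^ 2 * m y := sq_le_mul_of_hasSum hm hT he hQ
    _ ≤ T * (S * (L * k + α * e o)) := by gcongr; exacts [hT.nonneg hm, hasSum_le hpt hQ hbound]
    _ ≤ T * (S * (L * k + α * (k / m o))) := by gcongr; exact hT.nonneg hm
    _ = k * (S * T * (L + α / m o)) := by ring

end Sobolev

theorem spectral_bound_lin_general
    {X : Type*} (m : X → ℝ)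
    (hm_pos : ∀ x, 0 < m x) (hm_fin : Summable m)
    (S α : ℝ) (hS : 0 < S) (hα : 0 ≤ α)
    (o : X) (k : ℕ) (hk : 0 < k)
    (φ : Fin k → X → ℝ)
    (hφ_sum : ∀ i j, Summable (fun y => φ i y * φ j y * m y))
    (hφ_orth : ∀ i j, (∑' y, φ i y * φ j y * m y) = if i = j then (1 : ℝ) else 0)
    (lam : Fin k → ℝ) (hlam_mono : Monotone lam)
    (hsobolev : ∀ β : Fin k → ℝ, ∀ y : X,
      (∑ j, β j * φ j y) ^ 2 ≤
        S * ((∑ j, lam j * β j ^ 2) + α * (∑ j, β j * φ j o) ^ 2)) :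
    lam ⟨k - 1, Nat.sub_lt hk Nat.one_pos⟩ ≥ (k : ℝ) / (S * ∑' x, m x) - α / m o := by
  have : Nonempty (Fin k) := ⟨⟨0, hk⟩⟩
  have hT : 0 < ∑' x, m x := hm_fin.tsum_pos (fun x => (hm_pos x).le) o (hm_pos o)
  have hφ : ∀ i j, HasSum (fun y => φ i y * φ j y * m y) (if i = j then 1 else 0) :=
    fun i j => hφ_orth i j ▸ (hφ_sum i j).hasSum
  have hlam_last : ∀ j, lam j ≤ lam ⟨k - 1, Nat.sub_lt hk Nat.one_pos⟩ := fun j =>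
    hlam_mono (Fin.le_def.2 (Nat.le_sub_one_of_lt j.isLt))
  have hcard := card_le_of_sobolev (fun x => (hm_pos x).le) (hm_pos o) hm_fin.hasSum hS.le hα hφ
    hlam_last hsobolev
  rw [Fintype.card_fin] at hcard
  rw [ge_iff_le, sub_le_iff_le_add, div_le_iff₀ (mul_pos hS hT)]
  linarith

/-- Theorem `spectral_bound_lin`, applied to the first `k` eigenvalues
and an orthonormal family of corresponding eigenfunctions.
`X` is a countable set, `m` a finite measure of full support on `X`. Given `o ∈ X`,
functions `φ₁, …, φ_k` orthonormal in `ℓ²(X,m)` and reals `0 ≤ λ₁ ≤ … ≤ λ_k` such that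
every linear combination `φ = ∑ βⱼ φⱼ` satisfies the Sobolev-type bound
`‖φ‖_∞² ≤ S (∑ λⱼ βⱼ² + α |φ(o)|²)`, one has `λ_k ≥ k/(S·m(X)) − α/m(o)`. -/
theorem spectral_bound_lin
    {X : Type*} [Countable X] (m : X → ℝ)
    (hm_pos : ∀ x, 0 < m x) (hm_fin : Summable m)
    (S α : ℝ) (hS : 0 < S) (hα : 0 ≤ α)
    (o : X) (k : ℕ) (hk : 0 < k)
    (φ : Fin k → X → ℝ)
    (hφ_sum : ∀ i j, Summable (fun y => φ i y * φ j y * m y))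
    (hφ_orth : ∀ i j, (∑' y, φ i y * φ j y * m y) = if i = j then (1 : ℝ) else 0)
    (lam : Fin k → ℝ) (hlam_mono : Monotone lam) (hlam_nonneg : 0 ≤ lam ⟨0, hk⟩)
    (hsobolev : ∀ β : Fin k → ℝ, ∀ y : X,
      (∑ j, β j * φ j y) ^ 2 ≤
        S * ((∑ j, lam j * β j ^ 2) + α * (∑ j, β j * φ j o) ^ 2)) :
    lam ⟨k - 1, Nat.sub_lt hk Nat.one_pos⟩ ≥ (k : ℝ) / (S * ∑' x, m x) - α / m o :=
  spectral_bound_lin_general m hm_pos hm_fin S α hS hα o k hk φ hφ_sum hφ_orth lam hlam_mono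
    hsobolev
end

section
/- Let X be a countable set and m : X → ℝ with m(x) > 0 for all x and finite total mass m(X). Let p ∈ (2,∞) and S > 0. Let (φ_i)_{i∈ℕ} : X → ℝ be orthonormal in ℓ²(X,m) and let 0 ≤ λ_1 ≤ λ_2 ≤ … be nondecreasing nonnegative reals such that: (i) for every t > 0 and x ∈ X the series ∑_i e^{−tλ_i} φ_i(x)² converges; define p_t(x,y) = ∑_i e^{−tλ_i} φ_i(x) φ_i(y); (ii) p_t(x,y) ≥ 0 and ∑_{y∈X} p_t(x,y) m(y) ≤ 1 for all t > 0 and x ∈ X; (iii) for all t > 0 and x ∈ X, (∑_{y∈X} p_t(x,y)^p m(y))^{2/p} ≤ S · ∑_i λ_i e^{−2tλ_i} φ_i(x)², the right-hand side series being convergent. Then for every k ≥ 1: (1/k)∑_{i=1}^k λ_i ≥ (1/(eS)) · (k/m(X))^{1−2/p}, and in particular λ_k ≥ (1/(eS)) · (k/m(X))^{1−2/p}. (Eigenvalue lower bound of Theorem 'thm:pSobolev', stated via the eigenfunction expansion of the heat kernel of the generator of a Dirichlet form satisfying the ℓ^p-Sobolev inequality with constant S.) -/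
/-!
Fix `x` and let `V t = p_t(x,x) = ∑ e^{-tλᵢ} φᵢ(x)²`, so that `-V' t = ∑ λᵢ e^{-tλᵢ} φᵢ(x)²`.
The function `p_{t/2}(x,·)` has expansion coefficients `e^{-tλᵢ/2} φᵢ(x)`, so by Parseval its
squared `ℓ²(m)`-norm is `V t`. Interpolating between its `ℓ¹`-norm (at most `1` by the Markov
property) and its `ℓᵖ`-norm (controlled by the Sobolev inequality) gives the Nash differential
inequality `V ^ (2 - 2/p) ≤ -S V'`, which integrates to `V t ≤ (δ t / S) ^ (-1/δ)` with
`δ = 1 - 2/p`. Integrating over `x` against `m`, orthonormality bounds `∑_{i<k} e^{-tλᵢ}` by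
`m(X) (δ t / S) ^ (-1/δ)`; Jensen bounds this sum below by `k e^{-t λ̄}`, `λ̄` the mean of the
first `k` eigenvalues, and `t = 1/(δ λ̄)` gives `(k/m(X))^δ ≤ e S λ̄`.
-/

open scoped ENNReal BigOperators

theorem summable_and_ofReal_tsum_eq_of_tsum_ofReal_ne_top {α : Type*} {f : α → ℝ}
    (hf : ∀ a, 0 ≤ f a) (h : ∑' a, ENNReal.ofReal (f a) ≠ ∞) :
    Summable f ∧ ENNReal.ofReal (∑' a, f a) = ∑' a, ENNReal.ofReal (f a) := by
  have hs : Summable f := by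
    simpa [ENNReal.toReal_ofReal, hf] using ENNReal.summable_toReal h
  exact ⟨hs, ENNReal.ofReal_tsum_of_nonneg hf hs⟩

-- Transport to the unweighted `ℓ²(X)` by `f ↦ f * √m`: there the expansion converges in norm,
-- and the norm limit is the pointwise one because evaluations are continuous.
theorem hasSum_sq_mul_of_hasSum_orthonormal {X : Type*} {m : X → ℝ} (hm : ∀ x, 0 ≤ m x)
    {φ : ℕ → X → ℝ}
    (hφ_sum : ∀ i j, Summable (fun x => φ i x * φ j x * m x))
    (hφ_orth : ∀ i j, (∑' x, φ i x * φ j x * m x) = if i = j then (1 : ℝ) else 0)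
    {c : ℕ → ℝ} (hc : Summable fun i => c i ^ 2) {f : X → ℝ}
    (hf : ∀ x, HasSum (fun i => c i * φ i x) (f x)) :
    HasSum (fun x => f x ^ 2 * m x) (∑' i, c i ^ 2) := by
  have hψ (i : ℕ) : Memℓp (fun x => φ i x * √(m x)) 2 := by
    rw [memℓp_gen_iff (by norm_num)]
    refine (hφ_sum i i).congr fun x => ?_
    rw [ENNReal.toReal_ofNat, Real.rpow_two, Real.norm_eq_abs, sq_abs, mul_pow,
      Real.sq_sqrt (hm x), sq]
  let ψ (i : ℕ) : lp (fun _ : X => ℝ) 2 := ⟨_, hψ i⟩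
  have hψ_orth : Orthonormal ℝ ψ := by
    classical
    rw [orthonormal_iff_ite]
    intro i j
    rw [lp.inner_eq_tsum, ← hφ_orth i j]
    refine tsum_congr fun x => ?_
    simp only [ψ, RCLike.inner_apply, conj_trivial]
    linear_combination φ i x * φ j x * Real.mul_self_sqrt (hm x)
  obtain ⟨F, hF⟩ : Summable fun i => c i • ψ i := by
    simpa using (hψ_orth.orthogonalFamily.summable_iff_norm_sq_summable c).mpr (by simpa using hc)
  have hFx (x : X) : F x = f x * √(m x) := by
    have := (lp.evalCLM ℝ (fun _ : X => ℝ) 2 x).hasSum hF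
    simp only [lp.evalCLM, LinearMap.mkContinuous_apply, map_smul, lp.evalₗ_apply,
      smul_eq_mul] at this
    exact this.unique (by simpa [ψ, mul_assoc] using (hf x).mul_right (√(m x)))
  have hc_norm : HasSum (fun i => c i ^ 2) (‖F‖ ^ 2) := by
    refine (((continuous_norm.pow 2).tendsto F).comp hF).congr fun s => ?_
    simpa using hψ_orth.orthogonalFamily.norm_sum c s
  have hF_norm := lp.hasSum_norm (p := 2) (by norm_num) F
  norm_num [hFx, mul_pow, Real.sq_sqrt (hm _)] at hF_norm
  rwa [hc_norm.tsum_eq]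

theorem tsum_sq_mul_le_rpow_mul_rpow {X : Type*} {f w : X → ℝ} {p : ℝ} (hp : 2 < p)
    (hf : ∀ x, 0 ≤ f x) (hw : ∀ x, 0 ≤ w x)
    (hfp : Summable fun x => f x ^ p * w x) (hf1 : Summable fun x => f x * w x) :
    ∑' x, f x ^ 2 * w x ≤
      (∑' x, f x ^ p * w x) ^ (1 / (p - 1)) * (∑' x, f x * w x) ^ ((p - 2) / (p - 1)) := by
  have hp1 : p - 1 ≠ 0 := by linarith
  have hp2 : p - 2 ≠ 0 := by linarith
  have hq : (p - 1) / (p - 2) ≠ 0 := div_ne_zero hp1 hp2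
  have hinv : (p - 1)⁻¹ + ((p - 1) / (p - 2))⁻¹ = 1 := by
    rw [inv_div]; field_simp; ring
  have hexp : p * (p - 1)⁻¹ + ((p - 1) / (p - 2))⁻¹ = 2 := by
    rw [inv_div]; field_simp; ring
  have hrq : (p - 1).HolderConjugate ((p - 1) / (p - 2)) :=
    Real.holderConjugate_iff.mpr ⟨by linarith, hinv⟩
  have hfpw (x : X) : 0 ≤ f x ^ p * w x := mul_nonneg (Real.rpow_nonneg (hf x) _) (hw x)
  have hfw (x : X) : 0 ≤ f x * w x := mul_nonneg (hf x) (hw x)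
  have hprod (x : X) :
      (f x ^ p * w x) ^ (p - 1)⁻¹ * (f x * w x) ^ ((p - 1) / (p - 2))⁻¹ = f x ^ 2 * w x := by
    rw [Real.mul_rpow (Real.rpow_nonneg (hf x) _) (hw x), Real.mul_rpow (hf x) (hw x),
      ← Real.rpow_mul (hf x), mul_mul_mul_comm, ← Real.rpow_add' (hf x) (by rw [hexp]; norm_num),
      ← Real.rpow_add' (hw x) (by rw [hinv]; norm_num), hexp, hinv, Real.rpow_one, Real.rpow_two]
  have := Real.inner_le_Lp_mul_Lq_tsum_of_nonneg hrq
    (f := fun x => (f x ^ p * w x) ^ (p - 1)⁻¹) (g := fun x => (f x * w x) ^ ((p - 1) / (p - 2))⁻¹)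
    (fun x => Real.rpow_nonneg (hfpw x) _) (fun x => Real.rpow_nonneg (hfw x) _)
    (by simpa only [Real.rpow_inv_rpow (hfpw _) hp1] using hfp)
    (by simpa only [Real.rpow_inv_rpow (hfw _) hq] using hf1)
  simpa only [hprod, one_div_div, Real.rpow_inv_rpow (hfpw _) hp1,
    Real.rpow_inv_rpow (hfw _) hq] using this

theorem rpow_two_sub_le_of_markov_of_sobolev {X : Type*} {m : X → ℝ} (hm : ∀ x, 0 ≤ m x)
    {φ : ℕ → X → ℝ}
    (hφ_sum : ∀ i j, Summable (fun x => φ i x * φ j x * m x))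
    (hφ_orth : ∀ i j, (∑' x, φ i x * φ j x * m x) = if i = j then (1 : ℝ) else 0)
    {p K : ℝ} (hp : 2 < p) (hK : 0 ≤ K)
    {c : ℕ → ℝ} (hc : Summable fun i => c i ^ 2) {f : X → ℝ} (hf0 : ∀ x, 0 ≤ f x)
    (hf : ∀ x, HasSum (fun i => c i * φ i x) (f x))
    (hmarkov : ∑' x, ENNReal.ofReal (f x * m x) ≤ 1)
    (hsob : (∑' x, ENNReal.ofReal (f x ^ p * m x)) ^ (2 / p) ≤ ENNReal.ofReal K) :
    (∑' i, c i ^ 2) ^ (2 - 2 / p) ≤ K := by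
  have hp0 : 0 < 2 / p := by positivity
  have hp1 : p - 1 ≠ 0 := by linarith
  obtain ⟨hf1, hf1_eq⟩ := summable_and_ofReal_tsum_eq_of_tsum_ofReal_ne_top
    (fun x => mul_nonneg (hf0 x) (hm x)) (ne_top_of_le_ne_top ENNReal.one_ne_top hmarkov)
  obtain ⟨hfp, hfp_eq⟩ := summable_and_ofReal_tsum_eq_of_tsum_ofReal_ne_top
    (fun x => mul_nonneg (Real.rpow_nonneg (hf0 x) p) (hm x)) fun htop => by
      rw [htop, ENNReal.top_rpow_of_pos hp0] at hsob
      exact ENNReal.ofReal_ne_top (top_le_iff.mp hsob)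
  set A := ∑' x, f x ^ p * m x
  have hA : 0 ≤ A := tsum_nonneg fun x => mul_nonneg (Real.rpow_nonneg (hf0 x) p) (hm x)
  have hA_sob : A ^ (2 / p) ≤ K := by
    rwa [← hfp_eq, ENNReal.ofReal_rpow_of_nonneg hA hp0.le, ENNReal.ofReal_le_ofReal_iff hK]
      at hsob
  have hmass : ∑' x, f x * m x ≤ 1 := by
    rwa [← hf1_eq, ENNReal.ofReal_le_one] at hmarkov
  have hL2 : ∑' i, c i ^ 2 ≤ A ^ (1 / (p - 1)) := calc
    ∑' i, c i ^ 2 = ∑' x, f x ^ 2 * m x :=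
      ((hasSum_sq_mul_of_hasSum_orthonormal hm hφ_sum hφ_orth hc hf).tsum_eq).symm
    _ ≤ A ^ (1 / (p - 1)) * (∑' x, f x * m x) ^ ((p - 2) / (p - 1)) :=
      tsum_sq_mul_le_rpow_mul_rpow hp hf0 hm hfp hf1
    _ ≤ A ^ (1 / (p - 1)) := by
      refine mul_le_of_le_one_right (Real.rpow_nonneg hA _) (Real.rpow_le_one ?_ hmass ?_)
      · exact tsum_nonneg fun x => mul_nonneg (hf0 x) (hm x)
      · exact div_nonneg (by linarith) (by linarith)
  calc (∑' i, c i ^ 2) ^ (2 - 2 / p) ≤ (A ^ (1 / (p - 1))) ^ (2 - 2 / p) :=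
        Real.rpow_le_rpow (tsum_nonneg fun i => sq_nonneg _) hL2
          (by rw [sub_nonneg, div_le_iff₀ (by linarith)]; linarith)
    _ = A ^ (2 / p) := by
        rw [← Real.rpow_mul hA]; congr 1; field_simp
    _ ≤ K := hA_sob

theorem hasDerivAt_tsum_exp_neg_mul {lam b : ℕ → ℝ} (hlam : ∀ i, 0 ≤ lam i) (hb : ∀ i, 0 ≤ b i)
    (hsum : ∀ t > 0, Summable fun i => lam i * Real.exp (-t * lam i) * b i)
    {t : ℝ} (ht : 0 < t) (hsum_t : Summable fun i => Real.exp (-t * lam i) * b i) :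
    HasDerivAt (fun s => ∑' i, Real.exp (-s * lam i) * b i)
      (-∑' i, lam i * Real.exp (-t * lam i) * b i) t := by
  have hderiv (i : ℕ) (s : ℝ) : HasDerivAt (fun s => Real.exp (-s * lam i) * b i)
      (-(lam i * Real.exp (-s * lam i) * b i)) s :=
    ((((hasDerivAt_neg s).mul_const (lam i)).exp).mul_const (b i)).congr_deriv (by ring)
  have hbound (i : ℕ) (s : ℝ) (hs : s ∈ Set.Ioi (t / 2)) :
      ‖-(lam i * Real.exp (-s * lam i) * b i)‖ ≤ lam i * Real.exp (-(t / 2) * lam i) * b i := by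
    have hs : t / 2 < s := hs
    rw [norm_neg, Real.norm_of_nonneg (mul_nonneg (mul_nonneg (hlam i) (Real.exp_pos _).le) (hb i))]
    refine mul_le_mul_of_nonneg_right (mul_le_mul_of_nonneg_left ?_ (hlam i)) (hb i)
    exact Real.exp_le_exp.mpr (by nlinarith [hlam i])
  rw [← tsum_neg]
  exact hasDerivAt_tsum_of_isPreconnected (hsum (t / 2) (by positivity)) isOpen_Ioi
    isPreconnected_Ioi (fun i s _ => hderiv i s) hbound (by simpa using ht) hsum_t
    (by simpa using ht)

-- `(V ^ (1 - θ))' = (θ - 1) L / V ^ θ ≥ (θ - 1) / S`.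
theorem monotoneOn_rpow_one_sub_sub_mul {V L : ℝ → ℝ} {θ S : ℝ} (hθ : 1 < θ) (hS : 0 < S)
    (hV : ∀ t > 0, HasDerivAt V (-L t) t) (hV_pos : ∀ t > 0, 0 < V t)
    (hVL : ∀ t > 0, V t ^ θ ≤ S * L t) :
    MonotoneOn (fun t => V t ^ (1 - θ) - (θ - 1) / S * t) (Set.Ioi 0) := by
  have hderiv (t : ℝ) (ht : 0 < t) : HasDerivAt (fun t => V t ^ (1 - θ) - (θ - 1) / S * t)
      (-L t * (1 - θ) * V t ^ (1 - θ - 1) - (θ - 1) / S) t :=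
    ((hV t ht).rpow_const (Or.inl (hV_pos t ht).ne')).sub
      ((hasDerivAt_id t).const_mul _ |>.congr_deriv (mul_one _))
  refine monotoneOn_of_hasDerivWithinAt_nonneg (convex_Ioi 0)
    (fun t ht => (hderiv t ht).continuousAt.continuousWithinAt)
    (fun t ht => (hderiv t (by simpa using ht)).hasDerivWithinAt) fun t ht => ?_
  rw [interior_Ioi] at ht
  have hVt := hV_pos t ht
  have hpow : V t ^ (1 - θ - 1) = (V t ^ θ)⁻¹ := by
    rw [show 1 - θ - 1 = -θ by ring, Real.rpow_neg hVt.le]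
  have hVθ : 0 < V t ^ θ := Real.rpow_pos_of_pos hVt θ
  rw [hpow, sub_nonneg, show -L t * (1 - θ) * (V t ^ θ)⁻¹ = (θ - 1) * (L t / V t ^ θ) by ring]
  refine mul_le_mul_of_nonneg_left ?_ (by linarith)
  rw [le_div_iff₀ hVθ, inv_mul_le_iff₀ hS]
  exact hVL t ht

theorem le_rpow_of_hasDerivAt_of_rpow_le {V L : ℝ → ℝ} {θ S : ℝ} (hθ : 1 < θ) (hS : 0 < S)
    (hV : ∀ t > 0, HasDerivAt V (-L t) t) (hV_pos : ∀ t > 0, 0 < V t)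
    (hVL : ∀ t > 0, V t ^ θ ≤ S * L t) {t : ℝ} (ht : 0 < t) :
    V t ≤ ((θ - 1) / S * t) ^ (-(1 / (θ - 1))) := by
  have hc : 0 < (θ - 1) / S := div_pos (by linarith) hS
  have hmono := monotoneOn_rpow_one_sub_sub_mul hθ hS hV hV_pos hVL
  have hlow : (θ - 1) / S * t ≤ V t ^ (1 - θ) := by
    refine le_of_forall_pos_le_add fun ε hε => ?_
    set s := min t (ε / ((θ - 1) / S))
    have hs : 0 < s := lt_min ht (div_pos hε hc)
    have hst := hmono hs ht (min_le_left _ _)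
    have hsε : (θ - 1) / S * s ≤ ε := by
      rw [← le_div_iff₀' hc]; exact min_le_right _ _
    have := Real.rpow_pos_of_pos (hV_pos s hs) (1 - θ)
    simp only at hst
    linarith
  have hVt := hV_pos t ht
  have hθ1 : θ - 1 ≠ 0 := by linarith
  calc V t = (V t ^ (1 - θ)) ^ (-(1 / (θ - 1))) := by
        rw [← Real.rpow_mul hVt.le, show (1 - θ) * -(1 / (θ - 1)) = 1 by field_simp; ring,
          Real.rpow_one]
    _ ≤ ((θ - 1) / S * t) ^ (-(1 / (θ - 1))) :=
        Real.rpow_le_rpow_of_nonpos (by positivity) hlow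
          (neg_nonpos.mpr (div_nonneg zero_le_one (by linarith)))

theorem tsum_exp_mul_sq_le_of_markov_of_sobolev {X : Type*} {m : X → ℝ} (hm : ∀ x, 0 ≤ m x)
    {p S : ℝ} (hp : 2 < p) (hS : 0 < S) {φ : ℕ → X → ℝ}
    (hφ_sum : ∀ i j, Summable (fun x => φ i x * φ j x * m x))
    (hφ_orth : ∀ i j, (∑' x, φ i x * φ j x * m x) = if i = j then (1 : ℝ) else 0)
    {lam : ℕ → ℝ} (hlam_nonneg : ∀ i, 0 ≤ lam i)
    (hdiag_sum : ∀ t : ℝ, 0 < t → ∀ x : X,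
      Summable (fun i => Real.exp (-t * lam i) * φ i x ^ 2))
    (hker_sum : ∀ t : ℝ, 0 < t → ∀ x y : X,
      Summable (fun i => Real.exp (-t * lam i) * φ i x * φ i y))
    (hker_nonneg : ∀ t : ℝ, 0 < t → ∀ x y : X,
      0 ≤ ∑' i, Real.exp (-t * lam i) * φ i x * φ i y)
    (hmarkov : ∀ t : ℝ, 0 < t → ∀ x : X,
      ∑' y, ENNReal.ofReal ((∑' i, Real.exp (-t * lam i) * φ i x * φ i y) * m y) ≤ 1)
    (hsob_sum : ∀ t : ℝ, 0 < t → ∀ x : X,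
      Summable (fun i => lam i * Real.exp (-2 * t * lam i) * φ i x ^ 2))
    (hsob : ∀ t : ℝ, 0 < t → ∀ x : X,
      (∑' y, ENNReal.ofReal ((∑' i, Real.exp (-t * lam i) * φ i x * φ i y) ^ p * m y))
          ^ (2 / p)
        ≤ ENNReal.ofReal (S * ∑' i, lam i * Real.exp (-2 * t * lam i) * φ i x ^ 2))
    {t : ℝ} (ht : 0 < t) (x : X) :
    ∑' i, Real.exp (-t * lam i) * φ i x ^ 2 ≤ ((1 - 2 / p) / S * t) ^ (-(1 / (1 - 2 / p))) := by
  have hδ : 0 < 1 - 2 / p := by rw [sub_pos, div_lt_one (by linarith)]; exact hp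
  by_cases hx : ∀ i, φ i x = 0
  · simp only [hx, zero_pow two_ne_zero, mul_zero, tsum_zero]
    exact Real.rpow_nonneg (by positivity) _
  obtain ⟨i₀, hi₀⟩ := not_forall.mp hx
  have hhalf (s : ℝ) : -2 * (s / 2) = -s := by ring
  have hsq (s : ℝ) (i : ℕ) :
      (Real.exp (-(s / 2) * lam i) * φ i x) ^ 2 = Real.exp (-s * lam i) * φ i x ^ 2 := by
    rw [mul_pow, ← Real.exp_nat_mul]; ring_nf
  rw [show 1 - 2 / p = 2 - 2 / p - 1 by ring]
  refine le_rpow_of_hasDerivAt_of_rpow_le (by linarith) hS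
    (L := fun s => ∑' i, lam i * Real.exp (-s * lam i) * φ i x ^ 2)
    (fun s hs => hasDerivAt_tsum_exp_neg_mul hlam_nonneg (fun i => sq_nonneg _)
      (fun s hs => by simpa only [hhalf] using hsob_sum (s / 2) (by positivity) x) hs
      (hdiag_sum s hs x))
    (fun s hs => (hdiag_sum s hs x).tsum_pos (fun i => by positivity) i₀ (by positivity))
    (fun s hs => ?_) ht
  have hs2 : 0 < s / 2 := by positivity
  simpa only [hsq, hhalf] using rpow_two_sub_le_of_markov_of_sobolev hm hφ_sum hφ_orth hp
    (mul_nonneg hS.le (tsum_nonneg fun i =>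
      mul_nonneg (mul_nonneg (hlam_nonneg i) (Real.exp_pos _).le) (sq_nonneg _)))
    (by simpa only [hsq] using hdiag_sum s hs x) (hker_nonneg _ hs2 x)
    (fun y => (hker_sum _ hs2 x y).hasSum) (hmarkov _ hs2 x) (hsob _ hs2 x)

theorem sum_le_mul_tsum_of_orthonormal {X : Type*} {m : X → ℝ} (hm : ∀ x, 0 ≤ m x)
    (hm_sum : Summable m) {φ : ℕ → X → ℝ}
    (hφ_sum : ∀ i j, Summable (fun x => φ i x * φ j x * m x))
    (hφ_orth : ∀ i j, (∑' x, φ i x * φ j x * m x) = if i = j then (1 : ℝ) else 0)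
    {a : ℕ → ℝ} (ha : ∀ i, 0 ≤ a i) (hsum : ∀ x, Summable fun i => a i * φ i x ^ 2)
    {B : ℝ} (hB : ∀ x, ∑' i, a i * φ i x ^ 2 ≤ B) (s : Finset ℕ) :
    ∑ i ∈ s, a i ≤ B * ∑' x, m x := calc
  ∑ i ∈ s, a i = ∑ i ∈ s, ∑' x, a i * (φ i x * φ i x * m x) := by
    refine Finset.sum_congr rfl fun i _ => ?_
    rw [tsum_mul_left, hφ_orth, if_pos rfl, mul_one]
  _ = ∑' x, (∑ i ∈ s, a i * φ i x ^ 2) * m x := by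
    rw [← Summable.tsum_finsetSum fun i _ => (hφ_sum i i).mul_left (a i)]
    refine tsum_congr fun x => ?_
    rw [Finset.sum_mul]
    exact Finset.sum_congr rfl fun i _ => by ring
  _ ≤ ∑' x, B * m x := by
    refine Summable.tsum_le_tsum (fun x => mul_le_mul_of_nonneg_right ?_ (hm x)) ?_
      (hm_sum.mul_left B)
    · exact ((hsum x).sum_le_tsum s fun i _ => mul_nonneg (ha i) (sq_nonneg _)).trans (hB x)
    · exact (summable_sum fun i _ => (hφ_sum i i).mul_left (a i)).congr fun x => by
        rw [Finset.sum_mul]; exact Finset.sum_congr rfl fun i _ => by ring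
  _ = B * ∑' x, m x := tsum_mul_left

theorem card_mul_exp_mean_le_sum_exp {ι : Type*} (s : Finset ι) (a : ι → ℝ) :
    s.card * Real.exp ((∑ i ∈ s, a i) / s.card) ≤ ∑ i ∈ s, Real.exp (a i) := by
  rcases s.eq_empty_or_nonempty with rfl | hs
  · simp
  have hcard : (0 : ℝ) < s.card := by exact_mod_cast hs.card_pos
  have := convexOn_exp.map_sum_le (t := s) (w := fun _ => 1 / (s.card : ℝ)) (p := a)
    (fun _ _ => by positivity) (by rw [Finset.sum_const, nsmul_eq_mul]; field_simp)
    (fun _ _ => Set.mem_univ _)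
  simp only [smul_eq_mul, ← Finset.mul_sum] at this
  rw [div_eq_inv_mul, ← one_div]
  calc _ ≤ (s.card : ℝ) * (1 / s.card * ∑ i ∈ s, Real.exp (a i)) := by gcongr
    _ = _ := by field_simp

theorem le_exp_one_mul_of_forall_le_exp_mul_div {A b : ℝ} (hb : 0 ≤ b)
    (h : ∀ u > 0, A ≤ Real.exp (b * u) / u) : A ≤ Real.exp 1 * b := by
  rcases hb.eq_or_lt with rfl | hb
  · by_contra! hA
    have := h (2 / A) (by simpa using hA)
    rw [zero_mul, Real.exp_zero, one_div_div] at this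
    linarith
  · simpa [hb.ne'] using h (1 / b) (by positivity)

theorem rpow_div_le_exp_one_mul_of_forall_mul_exp_le {k M δ S b : ℝ} (hk : 0 < k) (hδ : 0 < δ)
    (hS : 0 < S) (hb : 0 ≤ b)
    (h : ∀ t > 0, k * Real.exp (-t * b) ≤ (δ / S * t) ^ (-(1 / δ)) * M) :
    (k / M) ^ δ ≤ Real.exp 1 * S * b := by
  have hM : 0 < M := by
    have h1 := (mul_pos hk (Real.exp_pos _)).trans_le (h 1 one_pos)
    exact pos_of_mul_pos_right h1 (by positivity)
  rw [mul_comm _ S, mul_assoc, ← div_le_iff₀' hS]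
  refine le_exp_one_mul_of_forall_le_exp_mul_div hb fun u hu => ?_
  have hu' : δ / S * (u / δ) = u / S := by field_simp
  have ht := h (u / δ) (by positivity)
  rw [hu', ← div_le_iff₀ hM, mul_div_right_comm] at ht
  calc (k / M) ^ δ / S = (k / M * Real.exp (-(u / δ) * b)) ^ δ * Real.exp (b * u) / S := by
        rw [Real.mul_rpow (by positivity) (Real.exp_pos _).le, ← Real.exp_mul, mul_assoc,
          ← Real.exp_add, show -(u / δ) * b * δ + b * u = 0 by field_simp; ring, Real.exp_zero,
          mul_one]
    _ ≤ ((u / S) ^ (-(1 / δ))) ^ δ * Real.exp (b * u) / S := by gcongr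
    _ = Real.exp (b * u) / u := by
        rw [← Real.rpow_mul (by positivity), show -(1 / δ) * δ = -1 by field_simp,
          Real.rpow_neg_one, inv_div]
        field_simp

theorem eigenvalue_lower_bound_pSobolev_general
    {X : Type*} (m : X → ℝ)
    (hm_pos : ∀ x, 0 < m x) (hm_fin : Summable m)
    (p S : ℝ) (hp : 2 < p) (hS : 0 < S)
    (φ : ℕ → X → ℝ)
    (hφ_sum : ∀ i j, Summable (fun x => φ i x * φ j x * m x))
    (hφ_orth : ∀ i j, (∑' x, φ i x * φ j x * m x) = if i = j then (1 : ℝ) else 0)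
    (lam : ℕ → ℝ)
    (hlam_nonneg : ∀ i, 0 ≤ lam i) (hlam_mono : Monotone lam)
    (hdiag_sum : ∀ t : ℝ, 0 < t → ∀ x : X,
      Summable (fun i => Real.exp (-t * lam i) * φ i x ^ 2))
    (hker_sum : ∀ t : ℝ, 0 < t → ∀ x y : X,
      Summable (fun i => Real.exp (-t * lam i) * φ i x * φ i y))
    (hker_nonneg : ∀ t : ℝ, 0 < t → ∀ x y : X,
      0 ≤ ∑' i, Real.exp (-t * lam i) * φ i x * φ i y)
    (hmarkov : ∀ t : ℝ, 0 < t → ∀ x : X,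
      ∑' y, ENNReal.ofReal ((∑' i, Real.exp (-t * lam i) * φ i x * φ i y) * m y) ≤ 1)
    (hsob_sum : ∀ t : ℝ, 0 < t → ∀ x : X,
      Summable (fun i => lam i * Real.exp (-2 * t * lam i) * φ i x ^ 2))
    (hsob : ∀ t : ℝ, 0 < t → ∀ x : X,
      (∑' y, ENNReal.ofReal ((∑' i, Real.exp (-t * lam i) * φ i x * φ i y) ^ p * m y))
          ^ (2 / p)
        ≤ ENNReal.ofReal (S * ∑' i, lam i * Real.exp (-2 * t * lam i) * φ i x ^ 2)) :
    ∀ k : ℕ, 0 < k →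
      (1 / (k : ℝ)) * ∑ i ∈ Finset.range k, lam i
          ≥ (1 / (Real.exp 1 * S)) * ((k : ℝ) / ∑' x, m x) ^ (1 - 2 / p)
      ∧ lam (k - 1) ≥ (1 / (Real.exp 1 * S)) * ((k : ℝ) / ∑' x, m x) ^ (1 - 2 / p) := by
  intro k hk
  simp only [one_div_mul_eq_div, ge_iff_le]
  have hm (x : X) : 0 ≤ m x := (hm_pos x).le
  have hδ : 0 < 1 - 2 / p := by rw [sub_pos, div_lt_one (by linarith)]; exact hp
  have hk' : (0 : ℝ) < k := by exact_mod_cast hk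
  set mean := (∑ i ∈ Finset.range k, lam i) / k
  have htrace (t : ℝ) (ht : 0 < t) : k * Real.exp (-t * mean) ≤
      ((1 - 2 / p) / S * t) ^ (-(1 / (1 - 2 / p))) * ∑' x, m x := calc
    k * Real.exp (-t * mean) ≤ ∑ i ∈ Finset.range k, Real.exp (-t * lam i) := by
      have := card_mul_exp_mean_le_sum_exp (Finset.range k) (fun i => -t * lam i)
      rwa [Finset.card_range, ← Finset.mul_sum, mul_div_assoc] at this
    _ ≤ _ := sum_le_mul_tsum_of_orthonormal hm hm_fin hφ_sum hφ_orth
      (fun i => (Real.exp_pos _).le) (hdiag_sum t ht)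
      (tsum_exp_mul_sq_le_of_markov_of_sobolev hm hp hS hφ_sum hφ_orth hlam_nonneg hdiag_sum
        hker_sum hker_nonneg hmarkov hsob_sum hsob ht) _
  have hmean : ((k : ℝ) / ∑' x, m x) ^ (1 - 2 / p) / (Real.exp 1 * S) ≤ mean := by
    rw [div_le_iff₀' (by positivity)]
    exact rpow_div_le_exp_one_mul_of_forall_mul_exp_le hk' hδ hS
      (div_nonneg (Finset.sum_nonneg fun i _ => hlam_nonneg i) hk'.le) htrace
  have hmean_le : mean ≤ lam (k - 1) := by
    have : ∑ i ∈ Finset.range k, lam i ≤ k * lam (k - 1) := by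
      simpa using Finset.sum_le_sum fun i hi =>
        hlam_mono (Nat.le_sub_one_of_lt (Finset.mem_range.mp hi))
    rwa [div_le_iff₀' hk']
  exact ⟨hmean, hmean.trans hmean_le⟩

/-- (eigenvalue lower bound of Theorem `thm:pSobolev`, stated via the
eigenfunction expansion `p_t(x,y) = ∑ᵢ e^{−tλᵢ} φᵢ(x) φᵢ(y)` of the heat kernel of the
generator of a Dirichlet form satisfying the `ℓ^p`-Sobolev inequality with constant `S`).
Here `(φᵢ)` is orthonormal in `ℓ²(X,m)`, `m` has finite total mass, and the assumptions
(i), (ii), (iii) are as in Statement 8. The conclusion is that for every `k ≥ 1`,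
`(1/k)∑_{i=1}^k λᵢ ≥ (1/(eS))·(k/m(X))^{1−2/p}`, and in particular
`λ_k ≥ (1/(eS))·(k/m(X))^{1−2/p}`. -/
theorem eigenvalue_lower_bound_pSobolev
    {X : Type*} [Countable X] (m : X → ℝ)
    (hm_pos : ∀ x, 0 < m x) (hm_fin : Summable m)
    (p S : ℝ) (hp : 2 < p) (hS : 0 < S)
    (φ : ℕ → X → ℝ)
    (hφ_sum : ∀ i j, Summable (fun x => φ i x * φ j x * m x))
    (hφ_orth : ∀ i j, (∑' x, φ i x * φ j x * m x) = if i = j then (1 : ℝ) else 0)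
    (lam : ℕ → ℝ)
    (hlam_nonneg : ∀ i, 0 ≤ lam i) (hlam_mono : Monotone lam)
    (hdiag_sum : ∀ t : ℝ, 0 < t → ∀ x : X,
      Summable (fun i => Real.exp (-t * lam i) * φ i x ^ 2))
    (hker_sum : ∀ t : ℝ, 0 < t → ∀ x y : X,
      Summable (fun i => Real.exp (-t * lam i) * φ i x * φ i y))
    (hker_nonneg : ∀ t : ℝ, 0 < t → ∀ x y : X,
      0 ≤ ∑' i, Real.exp (-t * lam i) * φ i x * φ i y)
    (hmarkov : ∀ t : ℝ, 0 < t → ∀ x : X,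
      ∑' y, ENNReal.ofReal ((∑' i, Real.exp (-t * lam i) * φ i x * φ i y) * m y) ≤ 1)
    (hsob_sum : ∀ t : ℝ, 0 < t → ∀ x : X,
      Summable (fun i => lam i * Real.exp (-2 * t * lam i) * φ i x ^ 2))
    (hsob : ∀ t : ℝ, 0 < t → ∀ x : X,
      (∑' y, ENNReal.ofReal ((∑' i, Real.exp (-t * lam i) * φ i x * φ i y) ^ p * m y))
          ^ (2 / p)
        ≤ ENNReal.ofReal (S * ∑' i, lam i * Real.exp (-2 * t * lam i) * φ i x ^ 2)) :
    ∀ k : ℕ, 0 < k →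
      (1 / (k : ℝ)) * ∑ i ∈ Finset.range k, lam i
          ≥ (1 / (Real.exp 1 * S)) * ((k : ℝ) / ∑' x, m x) ^ (1 - 2 / p)
      ∧ lam (k - 1) ≥ (1 / (Real.exp 1 * S)) * ((k : ℝ) / ∑' x, m x) ^ (1 - 2 / p) :=
  eigenvalue_lower_bound_pSobolev_general m hm_pos hm_fin p S hp hS φ hφ_sum hφ_orth lam hlam_nonneg
    hlam_mono hdiag_sum hker_sum hker_nonneg hmarkov hsob_sum hsob
end

section
/- Let X be a countably infinite set with an enumeration (x_j)_{j≥1} (a bijection ℕ≥1 → X), let C > 0, and let (a_k)_{k≥1} be a strictly increasing sequence of positive reals with a_k → ∞. Define m : X → ℝ by m(x_j) = a_1²(1/a_j² − 1/a_{j+1}²). Then: (i) m(x) > 0 for all x ∈ X and ∑_{x∈X} m(x) = 1, so m is a probability measure; (ii) for every k ≥ 1, m(X ∖ {x_1,…,x_k}) = a_1²/a_{k+1}²; and (iii) every sequence (λ_k)_{k≥1} of reals satisfying λ_{k+1} ≥ 1/(C · m(X ∖ {x_1,…,x_k})) for all k ≥ 1 satisfies λ_k / a_k → ∞ as k → ∞.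 (Content of Proposition 'no_upper_bound': on a uniformly transient graph there is no upper bound on eigenvalue growth, since the Dirichlet eigenvalues satisfy λ_{k+1} ≥ 1/(C·m(X∖{x_1,…,x_k})).) -/
open Filter Function Topology

/-! The mass function is the telescoping difference `g j - g (j + 1)` of `g k = a₀² / a_k²`,
which decreases strictly to `0`; hence the mass outside `x 0, …, x (k - 1)` is exactly `g k`.
The eigenvalue bound then reads `λ_k ≥ a_k² / (C a₀²)`, which outgrows `a_k`. -/

theorem hasSum_sub_succ_of_antitone {g : ℕ → ℝ} {l : ℝ} (hg : Antitone g)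
    (hl : Tendsto g atTop (𝓝 l)) : HasSum (fun n => g n - g (n + 1)) (g 0 - l) := by
  rw [hasSum_iff_tendsto_nat_of_nonneg fun n => sub_nonneg.2 (hg n.le_succ)]
  simp_rw [Finset.sum_range_sub']
  exact tendsto_const_nhds.sub hl

theorem hasSum_subtype_forall_ne_iff {X α : Type*} [AddCommMonoid α] [TopologicalSpace α]
    {x : ℕ → X} (hx : Bijective x) (f : X → α) (k : ℕ) {s : α} :
    HasSum (fun y : ({y : X | ∀ j < k, y ≠ x j} : Set X) => f y) s ↔
      HasSum (fun n => f (x (n + k))) s := by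
  let e : ℕ → ({y : X | ∀ j < k, y ≠ x j} : Set X) := fun n =>
    ⟨x (n + k), fun j hj h => by have := hx.injective h; omega⟩
  have he : Bijective e := by
    refine ⟨fun p q hpq => ?_, fun ⟨y, hy⟩ => ?_⟩
    · have := hx.injective (congrArg Subtype.val hpq)
      omega
    · obtain ⟨n, rfl⟩ := hx.surjective y
      have hkn : k ≤ n := not_lt.1 fun h => hy n h rfl
      exact ⟨n - k, Subtype.ext (congrArg x (Nat.sub_add_cancel hkn))⟩
  exact (Equiv.ofBijective e he).hasSum_iff.symm

section InverseSquares

variable {a : ℕ → ℝ}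

theorem strictAnti_div_sq (ha_pos : ∀ k, 0 < a k) (ha_mono : StrictMono a) {c : ℝ}
    (hc : 0 < c) : StrictAnti fun k => c / a k ^ 2 := fun _ _ hij =>
  div_lt_div_of_pos_left hc (pow_pos (ha_pos _) 2)
    (pow_lt_pow_left₀ (ha_mono hij) (ha_pos _).le two_ne_zero)

theorem tendsto_div_sq_zero (ha_top : Tendsto a atTop atTop) (c : ℝ) :
    Tendsto (fun k => c / a k ^ 2) atTop (𝓝 0) :=
  tendsto_const_nhds.div_atTop ((tendsto_pow_atTop two_ne_zero).comp ha_top)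

theorem tendsto_div_atTop_of_mul_sq_le {lam : ℕ → ℝ} {c : ℝ} (hc : 0 < c)
    (ha_pos : ∀ k, 0 < a k) (ha_top : Tendsto a atTop atTop)
    (h : ∀ᶠ k in atTop, c * a k ^ 2 ≤ lam k) :
    Tendsto (fun k => lam k / a k) atTop atTop := by
  refine tendsto_atTop_mono' atTop (h.mono fun k hk => ?_) (ha_top.const_mul_atTop hc)
  rw [le_div_iff₀ (ha_pos k)]
  linarith

end InverseSquares

/-- content of Proposition `no_upper_bound`.
Let `X` be a countably infinite set enumerated by a bijection `x : ℕ → X` (here `x j`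
plays the role of the point `x_{j+1}`), let `C > 0`, and let `(a_k)` be a strictly
increasing sequence of positive reals tending to `∞`. Define the measure `m` by
`m(x_j) = a₁²(1/a_j² − 1/a_{j+1}²)`. Then:
(i) `m > 0` everywhere and `∑_x m(x) = 1`, so `m` is a probability measure;
(ii) for every `k ≥ 1`, `m(X ∖ {x_1, …, x_k}) = a₁²/a_{k+1}²`;
(iii) every sequence `(λ_k)` with `λ_{k+1} ≥ 1/(C·m(X ∖ {x_1, …, x_k}))` for all
`k ≥ 1` satisfies `λ_k/a_k → ∞`. -/
theorem no_upper_bound_on_eigenvalue_growth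
    {X : Type*} (x : ℕ → X) (hx : Function.Bijective x)
    (C : ℝ) (hC : 0 < C)
    (a : ℕ → ℝ) (ha_pos : ∀ k, 0 < a k) (ha_mono : StrictMono a)
    (ha_top : Tendsto a atTop atTop)
    (m : X → ℝ)
    (hm_def : ∀ j : ℕ, m (x j) = (a 0) ^ 2 * (1 / (a j) ^ 2 - 1 / (a (j + 1)) ^ 2)) :
    (∀ y : X, 0 < m y) ∧ (∑' y, m y) = 1
    ∧ (∀ k : ℕ, 0 < k →
        (∑' y : ({y : X | ∀ j < k, y ≠ x j} : Set X), m ↑y) = (a 0) ^ 2 / (a k) ^ 2)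
    ∧ (∀ lam : ℕ → ℝ,
        (∀ k : ℕ, 0 < k →
          lam k ≥ 1 / (C * ∑' y : ({y : X | ∀ j < k, y ≠ x j} : Set X), m ↑y)) →
        Tendsto (fun k => lam k / a k) atTop atTop) := by
  set g : ℕ → ℝ := fun k => a 0 ^ 2 / a k ^ 2
  have ha0 : a 0 ≠ 0 := (ha_pos 0).ne'
  have hg_anti : StrictAnti g := strictAnti_div_sq ha_pos ha_mono (pow_pos (ha_pos 0) 2)
  have hm : ∀ j, m (x j) = g j - g (j + 1) := fun j => by rw [hm_def, mul_sub]; ring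
  have hm_shift : ∀ k, HasSum (fun n => m (x (n + k))) (g k) := fun k => by
    simpa [hm, add_right_comm] using hasSum_sub_succ_of_antitone
      (hg_anti.antitone.comp_monotone fun _ _ h => Nat.add_le_add_right h k)
      ((tendsto_div_sq_zero ha_top _).comp (tendsto_add_atTop_nat k))
  have h_tail : ∀ k, (∑' y : ({y : X | ∀ j < k, y ≠ x j} : Set X), m ↑y) = g k := fun k =>
    ((hasSum_subtype_forall_ne_iff hx m k).2 (hm_shift k)).tsum_eq
  refine ⟨fun y => ?_, ?_, fun k _ => h_tail k, fun lam hlam => ?_⟩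
  · obtain ⟨j, rfl⟩ := hx.surjective y
    exact hm j ▸ sub_pos.2 (hg_anti j.lt_succ_self)
  · have h := (Equiv.ofBijective x hx).hasSum_iff.1 (by simpa [comp_def] using hm_shift 0)
    simp [h.tsum_eq, g, ha0]
  · refine tendsto_div_atTop_of_mul_sq_le (inv_pos.2 (mul_pos hC (pow_pos (ha_pos 0) 2)))
      ha_pos ha_top (eventually_atTop.2 ⟨1, fun k hk => ?_⟩)
    calc (C * a 0 ^ 2)⁻¹ * a k ^ 2 = 1 / (C * g k) := by simp only [g]; field_simp
      _ ≤ lam k := h_tail k ▸ hlam k hk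
end

section
/- Let X be a countable set, m : X → ℝ with m(x) > 0 for all x, b : X × X → [0,∞) symmetric with b(x,x) = 0 and ∑_{y∈X} b(x,y) < ∞ for all x, and c : X → [0,∞). Define the energy form Q̃(f) = (1/2)∑_{x,y∈X} b(x,y)(f(x)−f(y))² + ∑_{x∈X} c(x) f(x)² and let D = { f : X → ℝ : ∑_{x∈X} f(x)² m(x) < ∞ and Q̃(f) < ∞ } be the domain of the Neumann form. If every f ∈ D is bounded (i.e. D ⊆ ℓ^∞(X)), then there exists a constant C > 0 such that sup_{x∈X} f(x)² ≤ C (Q̃(f) + ∑_{x∈X} f(x)² m(x)) for all f ∈ D. (Closed-graph bound underlying Lemma 'Canon_Sobolev_embedding' and Proposition 'spectrum_discrete': on a canonically compactifiable graph the embedding of the form domain into ℓ^∞ is bounded.) -/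
/-!
If there were no such constant, homogeneity and `Q̃(|f|) ≤ Q̃(f)` would give, for every `n`, a
nonnegative `hₙ` with `E(hₙ) ≤ 4⁻ⁿ` and `hₙ(xₙ) > n`, where `E = Q̃ + ‖·‖²_m`. Point evaluations
are controlled by the `ℓ²(m)`-part of `E`, so `g = ∑ hₙ` converges pointwise, and the weighted
Cauchy–Schwarz inequality `(∑ uₙ)² ≤ 2 ∑ 2ⁿ uₙ²`, applied to every squared value and squared
difference in `E`, gives `E(g) ≤ 2 ∑ 2ⁿ E(hₙ) < ∞`. So `g` lies in the form domain, yet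
`g(xₙ) ≥ hₙ(xₙ) > n`.
-/

open scoped ENNReal

namespace ENNReal

theorem two_mul_le_add_sq (a b : ℝ≥0∞) : 2 * a * b ≤ a ^ 2 + b ^ 2 := by
  rcases eq_or_ne a ⊤ with rfl | ha
  · simp
  rcases eq_or_ne b ⊤ with rfl | hb
  · simp
  lift a to NNReal using ha
  lift b to NNReal using hb
  exact_mod_cast _root_.two_mul_le_add_sq a b

theorem two_mul_mul_tsum_le (t : ℝ≥0∞) (u : ℕ → ℝ≥0∞) :
    2 * t * ∑' n, u n ≤ 2 * t ^ 2 + ∑' n, 2 ^ n * u n ^ 2 := by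
  have hterm : ∀ n : ℕ, 2 * t * u n ≤ t ^ 2 * 2⁻¹ ^ n + 2 ^ n * u n ^ 2 := by
    intro n
    have hinv : (2 : ℝ≥0∞)⁻¹ ^ n * 2 ^ n = 1 := by
      rw [← ENNReal.inv_pow]
      exact ENNReal.inv_mul_cancel (pow_ne_zero _ two_ne_zero) (pow_ne_top ofNat_ne_top)
    calc 2 * t * u n = 2⁻¹ ^ n * (2 * t * (2 ^ n * u n)) := by
          rw [mul_left_comm, ← mul_assoc (2⁻¹ ^ n), hinv, one_mul, mul_assoc]
      _ ≤ 2⁻¹ ^ n * (t ^ 2 + (2 ^ n * u n) ^ 2) := by gcongr; exact two_mul_le_add_sq _ _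
      _ = t ^ 2 * 2⁻¹ ^ n + 2 ^ n * u n ^ 2 * (2⁻¹ ^ n * 2 ^ n) := by ring
      _ = t ^ 2 * 2⁻¹ ^ n + 2 ^ n * u n ^ 2 := by rw [hinv, mul_one]
  calc 2 * t * ∑' n, u n = ∑' n, 2 * t * u n := ENNReal.tsum_mul_left.symm
    _ ≤ ∑' n, (t ^ 2 * 2⁻¹ ^ n + 2 ^ n * u n ^ 2) := ENNReal.tsum_le_tsum hterm
    _ = 2 * t ^ 2 + ∑' n, 2 ^ n * u n ^ 2 := by
      rw [ENNReal.tsum_add, ENNReal.tsum_mul_left, ENNReal.tsum_geometric, one_sub_inv_two,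
        inv_inv, mul_comm]

theorem sq_le_two_mul_of_forall_two_mul_mul_le {S T : ℝ≥0∞}
    (h : ∀ t, 2 * t * S ≤ 2 * t ^ 2 + T) : S ^ 2 ≤ 2 * T := by
  rcases eq_or_ne S ⊤ with rfl | hS
  · have hT : T = ⊤ := by simpa using h 1
    simp [hT]
  -- the AM-GM bound at `t = S / 2`
  obtain ⟨a, rfl⟩ : ∃ a, S = 2 * a :=
    ⟨S / 2, (ENNReal.mul_div_cancel two_ne_zero ofNat_ne_top).symm⟩
  have ha : 2 * a ^ 2 ≠ ⊤ := by
    have : a ≠ ⊤ := by rintro rfl; simp at hS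
    exact mul_ne_top ofNat_ne_top (pow_ne_top this)
  have h2 : 2 * a ^ 2 + 2 * a ^ 2 ≤ 2 * a ^ 2 + T := by
    convert h a using 1; ring
  calc (2 * a) ^ 2 = 2 * (2 * a ^ 2) := by ring
    _ ≤ 2 * T := by gcongr; exact (ENNReal.add_le_add_iff_left ha).mp h2

theorem sq_tsum_le_two_mul_tsum_two_pow_mul_sq (u : ℕ → ℝ≥0∞) :
    (∑' n, u n) ^ 2 ≤ 2 * ∑' n, 2 ^ n * u n ^ 2 :=
  sq_le_two_mul_of_forall_two_mul_mul_le fun t => two_mul_mul_tsum_le t u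

theorem ofReal_sq_tsum_le {a : ℕ → ℝ} (ha : Summable a) :
    ENNReal.ofReal ((∑' n, a n) ^ 2) ≤ 2 * ∑' n, 2 ^ n * ENNReal.ofReal (a n ^ 2) := by
  have habs : |∑' n, a n| ≤ ∑' n, |a n| := by
    simpa only [Real.norm_eq_abs] using norm_tsum_le_tsum_norm ha.norm
  calc ENNReal.ofReal ((∑' n, a n) ^ 2) ≤ ENNReal.ofReal ((∑' n, |a n|) ^ 2) :=
        ENNReal.ofReal_le_ofReal (sq_le_sq' (abs_le.mp habs).1 (abs_le.mp habs).2)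
    _ = (∑' n, ENNReal.ofReal |a n|) ^ 2 := by
        rw [ENNReal.ofReal_pow (tsum_nonneg fun n => abs_nonneg _),
          ENNReal.ofReal_tsum_of_nonneg (fun n => abs_nonneg _) ha.abs]
    _ ≤ 2 * ∑' n, 2 ^ n * ENNReal.ofReal |a n| ^ 2 := sq_tsum_le_two_mul_tsum_two_pow_mul_sq _
    _ = 2 * ∑' n, 2 ^ n * ENNReal.ofReal (a n ^ 2) := by
        simp only [← ENNReal.ofReal_pow (abs_nonneg _), sq_abs]

end ENNReal

theorem summable_of_sq_le_mul_geometric {a : ℕ → ℝ} {C : ℝ} (h : ∀ n, a n ^ 2 ≤ C * 4⁻¹ ^ n) :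
    Summable a := by
  refine Summable.of_norm_bounded
    ((summable_geometric_of_lt_one (by norm_num) (by norm_num : (2 : ℝ)⁻¹ < 1)).mul_left √C)
    fun n => ?_
  calc ‖a n‖ = |a n| := Real.norm_eq_abs _
    _ ≤ √(C * 4⁻¹ ^ n) := Real.abs_le_sqrt (h n)
    _ = √C * 2⁻¹ ^ n := by
      rw [Real.sqrt_mul' _ (by positivity), show (4 : ℝ)⁻¹ ^ n = (2⁻¹ ^ n) ^ 2 by
        rw [← pow_mul, mul_comm, pow_mul]; norm_num, Real.sqrt_sq (by positivity)]

section

variable {X : Type*}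

theorem summable_apply_of_le_geometric {E : (X → ℝ) → ℝ≥0∞} {m : X → ℝ} (hm : ∀ x, 0 < m x)
    (hEm : ∀ f x, ENNReal.ofReal (m x * f x ^ 2) ≤ E f) {h : ℕ → X → ℝ}
    (hh : ∀ n, E (h n) ≤ ENNReal.ofReal (4⁻¹ ^ n)) (x : X) :
    Summable fun n => h n x := by
  refine summable_of_sq_le_mul_geometric (C := (m x)⁻¹) fun n => ?_
  have := (hEm (h n) x).trans (hh n)
  rw [ENNReal.ofReal_le_ofReal_iff (by positivity)] at this
  rw [inv_mul_eq_div, le_div_iff₀ (hm x)]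
  linarith

/-- The constant `2 * 2 ^ n` in `tsum_le` is that of
`ENNReal.sq_tsum_le_two_mul_tsum_two_pow_mul_sq`. -/
structure IsQuadraticEnergy (E : (X → ℝ) → ℝ≥0∞) : Prop where
  smul : ∀ (t : ℝ) (f : X → ℝ), E (t • f) = ENNReal.ofReal (t ^ 2) * E f
  abs_le : ∀ f : X → ℝ, E (fun x => |f x|) ≤ E f
  tsum_le : ∀ h : ℕ → X → ℝ, (∀ x, Summable fun n => h n x) →
    E (fun x => ∑' n, h n x) ≤ 2 * ∑' n, 2 ^ n * E (h n)

namespace IsQuadraticEnergy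

variable {E F : (X → ℝ) → ℝ≥0∞}

theorem add (hE : IsQuadraticEnergy E) (hF : IsQuadraticEnergy F) :
    IsQuadraticEnergy fun f => E f + F f where
  smul t f := by rw [hE.smul, hF.smul, mul_add]
  abs_le f := add_le_add (hE.abs_le f) (hF.abs_le f)
  tsum_le h hh := by
    simp only [mul_add, ENNReal.tsum_add]
    exact add_le_add (hE.tsum_le h hh) (hF.tsum_le h hh)

theorem const_mul (hE : IsQuadraticEnergy E) (a : ℝ≥0∞) :
    IsQuadraticEnergy fun f => a * E f where
  smul t f := by rw [hE.smul, mul_left_comm]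
  abs_le f := mul_le_mul_right (hE.abs_le f) a
  tsum_le h hh := by
    simp only [mul_left_comm _ a, ENNReal.tsum_mul_left]
    exact mul_le_mul_right (hE.tsum_le h hh) a

theorem tsum {ι : Type*} {E : ι → (X → ℝ) → ℝ≥0∞} (hE : ∀ i, IsQuadraticEnergy (E i)) :
    IsQuadraticEnergy fun f => ∑' i, E i f where
  smul t f := by simp only [(hE _).smul, ENNReal.tsum_mul_left]
  abs_le f := ENNReal.tsum_le_tsum fun i => (hE i).abs_le f
  tsum_le h hh := calc
    ∑' i, E i (fun x => ∑' n, h n x) ≤ ∑' i, 2 * ∑' n, 2 ^ n * E i (h n) :=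
      ENNReal.tsum_le_tsum fun i => (hE i).tsum_le h hh
    _ = 2 * ∑' n, 2 ^ n * ∑' i, E i (h n) := by
      rw [ENNReal.tsum_mul_left, ENNReal.tsum_comm]
      simp only [ENNReal.tsum_mul_left]

theorem ofReal_mul_sq_comp {w : ℝ} (hw : 0 ≤ w) (ℓ : (X → ℝ) → ℝ)
    (hℓ_smul : ∀ (t : ℝ) f, ℓ (t • f) = t * ℓ f)
    (hℓ_abs : ∀ f, |ℓ (fun x => |f x|)| ≤ |ℓ f|)
    (hℓ_tsum : ∀ h : ℕ → X → ℝ, (∀ x, Summable fun n => h n x) →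
      HasSum (fun n => ℓ (h n)) (ℓ fun x => ∑' n, h n x)) :
    IsQuadraticEnergy fun f => ENNReal.ofReal (w * ℓ f ^ 2) where
  smul t f := by
    rw [hℓ_smul, ← ENNReal.ofReal_mul (sq_nonneg t)]
    ring_nf
  abs_le f := ENNReal.ofReal_le_ofReal <| mul_le_mul_of_nonneg_left (sq_le_sq.mpr (hℓ_abs f)) hw
  tsum_le h hh := by
    have hsum := hℓ_tsum h hh
    simp only [ENNReal.ofReal_mul hw, mul_left_comm _ (ENNReal.ofReal w), ENNReal.tsum_mul_left]
    rw [← hsum.tsum_eq]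
    exact mul_le_mul_right (ENNReal.ofReal_sq_tsum_le hsum.summable) _

theorem ofReal_mul_sq_apply {w : ℝ} (hw : 0 ≤ w) (x : X) :
    IsQuadraticEnergy fun f => ENNReal.ofReal (w * f x ^ 2) :=
  ofReal_mul_sq_comp hw (fun f => f x) (fun _ _ => rfl) (fun f => (abs_abs (f x)).le)
    fun _ hh => (hh x).hasSum

theorem ofReal_mul_sq_sub_apply {w : ℝ} (hw : 0 ≤ w) (x y : X) :
    IsQuadraticEnergy fun f => ENNReal.ofReal (w * (f x - f y) ^ 2) :=
  ofReal_mul_sq_comp hw (fun f => f x - f y) (fun t f => (mul_sub t (f x) (f y)).symm)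
    (fun f => abs_abs_sub_abs_le_abs_sub (f x) (f y)) fun _ hh => (hh x).hasSum.sub (hh y).hasSum

variable (hE : IsQuadraticEnergy E)
include hE

theorem tsum_lt_top {h : ℕ → X → ℝ} (hsum : ∀ x, Summable fun n => h n x)
    (hh : ∀ n, E (h n) ≤ ENNReal.ofReal (4⁻¹ ^ n)) :
    E (fun x => ∑' n, h n x) < ⊤ := by
  have hgeom : ∀ n : ℕ, (2 : ℝ≥0∞) ^ n * ENNReal.ofReal (4⁻¹ ^ n) = ENNReal.ofReal (2⁻¹ ^ n) := by
    intro n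
    rw [← ENNReal.ofReal_ofNat 2, ← ENNReal.ofReal_pow zero_le_two,
      ← ENNReal.ofReal_mul (by positivity), ← mul_pow]
    norm_num
  calc E (fun x => ∑' n, h n x) ≤ 2 * ∑' n, 2 ^ n * E (h n) := hE.tsum_le h hsum
    _ ≤ 2 * ∑' n : ℕ, ENNReal.ofReal (2⁻¹ ^ n) := by
      gcongr with n
      exact (mul_le_mul_right (hh n) _).trans_eq (hgeom n)
    _ < ⊤ := ENNReal.mul_lt_top ENNReal.ofNat_lt_top
      (summable_geometric_of_lt_one (by norm_num) (by norm_num)).tsum_ofReal_lt_top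

theorem exists_nonneg_le_ofReal_and_lt_apply
    (hE_unbdd : ∀ C : ℝ, 0 < C → ∃ f, E f < ⊤ ∧ ∃ x, C * (E f).toReal < f x ^ 2)
    {ε : ℝ} (hε : 0 < ε) (M : ℝ) :
    ∃ f : X → ℝ, 0 ≤ f ∧ E f ≤ ENNReal.ofReal ε ∧ ∃ x, M < f x := by
  obtain ⟨f, hf, x, hfx⟩ := hE_unbdd ((|M| + 1) ^ 2 / ε) (by positivity)
  have hfx_pos : 0 < f x ^ 2 :=
    lt_of_le_of_lt (mul_nonneg (div_nonneg (sq_nonneg _) hε.le) ENNReal.toReal_nonneg) hfx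
  have ht : 0 ≤ (|M| + 1) / |f x| := by positivity
  set t := (|M| + 1) / |f x|
  refine ⟨t • fun y => |f y|, fun y => mul_nonneg ht (abs_nonneg _), ?_, x, ?_⟩
  · calc E (t • fun y => |f y|) ≤ ENNReal.ofReal (t ^ 2) * E f := by
          rw [hE.smul]; exact mul_le_mul_right (hE.abs_le f) _
      _ = ENNReal.ofReal (t ^ 2 * (E f).toReal) := by
          rw [ENNReal.ofReal_mul (sq_nonneg t), ENNReal.ofReal_toReal hf.ne]
      _ ≤ ENNReal.ofReal ε := by
          refine ENNReal.ofReal_le_ofReal ?_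
          rw [div_mul_eq_mul_div, div_lt_iff₀ hε] at hfx
          rw [div_pow, sq_abs, div_mul_eq_mul_div, div_le_iff₀ hfx_pos]
          linarith
  · have : 0 < |f x| := abs_pos.mpr fun h => by simp [h] at hfx_pos
    simp only [Pi.smul_apply, smul_eq_mul, t, div_mul_cancel₀ _ this.ne']
    linarith [le_abs_self M]

theorem exists_sq_le_mul_toReal {m : X → ℝ} (hm : ∀ x, 0 < m x)
    (hEm : ∀ f x, ENNReal.ofReal (m x * f x ^ 2) ≤ E f)
    (hbdd : ∀ f, E f < ⊤ → ∃ B : ℝ, ∀ x, |f x| ≤ B) :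
    ∃ C : ℝ, 0 < C ∧ ∀ f, E f < ⊤ → ∀ x, f x ^ 2 ≤ C * (E f).toReal := by
  by_contra! hE_unbdd
  choose h hh_nonneg hh_le x hx using fun n : ℕ =>
    hE.exists_nonneg_le_ofReal_and_lt_apply hE_unbdd (ε := 4⁻¹ ^ n) (by positivity) n
  have hsum := summable_apply_of_le_geometric hm hEm hh_le
  obtain ⟨B, hB⟩ := hbdd _ (hE.tsum_lt_top hsum hh_le)
  set n := ⌈B⌉₊
  have : (n : ℝ) < B := calc
    (n : ℝ) < h n (x n) := hx n
    _ ≤ ∑' k, h k (x n) := (hsum (x n)).le_tsum n fun k _ => hh_nonneg k (x n)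
    _ ≤ B := (le_abs_self _).trans (hB (x n))
  linarith [Nat.le_ceil B]

end IsQuadraticEnergy

noncomputable def graphEnergy (b : X → X → ℝ) (c : X → ℝ) (f : X → ℝ) : ℝ≥0∞ :=
  (1 / 2 : ℝ≥0∞) * (∑' x, ∑' y, ENNReal.ofReal (b x y * (f x - f y) ^ 2))
    + ∑' x, ENNReal.ofReal (c x * f x ^ 2)

theorem isQuadraticEnergy_graphEnergy {b : X → X → ℝ} (hb : ∀ x y, 0 ≤ b x y) {c : X → ℝ}
    (hc : ∀ x, 0 ≤ c x) : IsQuadraticEnergy (graphEnergy b c) :=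
  .add (.const_mul (.tsum fun x => .tsum fun y => .ofReal_mul_sq_sub_apply (hb x y) x y) _)
    (.tsum fun x => .ofReal_mul_sq_apply (hc x) x)

theorem tsum_ofReal_mul_sq_eq {m : X → ℝ} (hm : ∀ x, 0 ≤ m x) {f : X → ℝ}
    (hf : Summable fun x => f x ^ 2 * m x) :
    ∑' x, ENNReal.ofReal (m x * f x ^ 2) = ENNReal.ofReal (∑' x, f x ^ 2 * m x) := by
  rw [ENNReal.ofReal_tsum_of_nonneg (fun x => mul_nonneg (sq_nonneg _) (hm x)) hf]
  simp only [mul_comm]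

theorem summable_of_tsum_ofReal_mul_sq_ne_top {m : X → ℝ} (hm : ∀ x, 0 ≤ m x) {f : X → ℝ}
    (hf : ∑' x, ENNReal.ofReal (m x * f x ^ 2) ≠ ⊤) : Summable fun x => f x ^ 2 * m x :=
  (ENNReal.summable_toReal hf).congr fun x => by
    rw [ENNReal.toReal_ofReal (mul_nonneg (hm x) (sq_nonneg _)), mul_comm]

end

theorem canonically_compactifiable_sobolev_bound_general
    {X : Type*} (m : X → ℝ) (hm_pos : ∀ x, 0 < m x)
    (b : X → X → ℝ)
    (hb_nonneg : ∀ x y, 0 ≤ b x y)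
    (c : X → ℝ) (hc : ∀ x, 0 ≤ c x)
    (Qt : (X → ℝ) → ℝ≥0∞)
    (hQt : ∀ f : X → ℝ,
      Qt f = (1 / 2 : ℝ≥0∞) * (∑' x, ∑' y, ENNReal.ofReal (b x y * (f x - f y) ^ 2))
              + ∑' x, ENNReal.ofReal (c x * f x ^ 2))
    (hbounded : ∀ f : X → ℝ,
      Summable (fun x => f x ^ 2 * m x) → Qt f < ⊤ → ∃ B : ℝ, ∀ x, |f x| ≤ B) :
    ∃ C : ℝ, 0 < C ∧ ∀ f : X → ℝ,
      Summable (fun x => f x ^ 2 * m x) → Qt f < ⊤ →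
      ∀ x : X, f x ^ 2 ≤ C * ((Qt f).toReal + ∑' x, f x ^ 2 * m x) := by
  obtain rfl : Qt = graphEnergy b c := funext hQt
  have hm := fun x => (hm_pos x).le
  have hE := (isQuadraticEnergy_graphEnergy hb_nonneg hc).add
    (.tsum fun x => .ofReal_mul_sq_apply (hm x) x)
  obtain ⟨C, hC, hCE⟩ := hE.exists_sq_le_mul_toReal hm_pos
    (fun f x => (ENNReal.le_tsum x).trans le_add_self) fun f hf =>
      hbounded f (summable_of_tsum_ofReal_mul_sq_ne_top hm (ENNReal.add_lt_top.mp hf).2.ne)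
        (ENNReal.add_lt_top.mp hf).1
  refine ⟨C, hC, fun f hf hQ x => ?_⟩
  have hfin := ENNReal.add_lt_top.mpr
    ⟨hQ, (tsum_ofReal_mul_sq_eq hm hf).trans_lt ENNReal.ofReal_lt_top⟩
  convert hCE f hfin x using 2
  rw [tsum_ofReal_mul_sq_eq hm hf, ENNReal.toReal_add hQ.ne ENNReal.ofReal_ne_top,
    ENNReal.toReal_ofReal (tsum_nonneg fun x => mul_nonneg (sq_nonneg _) (hm x))]

/-- closed-graph bound underlying Lemma `Canon_Sobolev_embedding` and
Proposition `spectrum_discrete`. Let `(b,c)` be a graph over a countable set `X` with a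
positive weight `m`, with energy form
`Q̃(f) = (1/2)∑_{x,y} b(x,y)(f(x)−f(y))² + ∑_x c(x) f(x)²` (a sum in `ℝ≥0∞`), and let
`D = {f : ∑_x f(x)² m(x) < ∞ and Q̃(f) < ∞}` be the domain of the Neumann form. If every
`f ∈ D` is bounded, then there is `C > 0` with
`sup_x f(x)² ≤ C (Q̃(f) + ∑_x f(x)² m(x))` for all `f ∈ D`. -/
theorem canonically_compactifiable_sobolev_bound
    {X : Type*} [Countable X] (m : X → ℝ) (hm_pos : ∀ x, 0 < m x)
    (b : X → X → ℝ)
    (hb_sym : ∀ x y, b x y = b y x)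
    (hb_nonneg : ∀ x y, 0 ≤ b x y)
    (hb_diag : ∀ x, b x x = 0)
    (hb_row : ∀ x, Summable (fun y => b x y))
    (c : X → ℝ) (hc : ∀ x, 0 ≤ c x)
    (Qt : (X → ℝ) → ℝ≥0∞)
    (hQt : ∀ f : X → ℝ,
      Qt f = (1 / 2 : ℝ≥0∞) * (∑' x, ∑' y, ENNReal.ofReal (b x y * (f x - f y) ^ 2))
              + ∑' x, ENNReal.ofReal (c x * f x ^ 2))
    (hbounded : ∀ f : X → ℝ,
      Summable (fun x => f x ^ 2 * m x) → Qt f < ⊤ → ∃ B : ℝ, ∀ x, |f x| ≤ B) :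
    ∃ C : ℝ, 0 < C ∧ ∀ f : X → ℝ,
      Summable (fun x => f x ^ 2 * m x) → Qt f < ⊤ →
      ∀ x : X, f x ^ 2 ≤ C * ((Qt f).toReal + ∑' x, f x ^ 2 * m x) :=
  canonically_compactifiable_sobolev_bound_general m hm_pos b hb_nonneg c hc Qt hQt hbounded
end
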